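/- arXiv:0901.1627 — 2 statements merged into one kernel-verified Lean document; each statement's English description precedes it below -/
import Mathlib

section
/- In the category Cat of small categories, let I = {(0 → 1), (2 ↪ [1]), p: P → [1]}, where 0 is the empty category, 1 the terminal category, 2 the discrete category on two objects, [1] the linearly ordered set {0 < 1} viewed as a category, P the pushout of the inclusion 2 ↪ [1] with itself (the parallel pair), and p the functor sending both nontrivial arrows of P to the nontrivial arrow of [1]. Then: (1) I^□ consists exactly of those functors that are full, faithful and surjective on objects; (2) □(I^□) consists exactly of those functors that are injective on objects. -/
/-!
Lifting against `0 → 1`, `2 ↪ [1]` and `p : P → [1]` says exactly that a functor is surjective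
on objects, full, and faithful respectively: a square against each generator picks out an
object, a morphism, or a parallel pair with equal images, and a lift is a preimage.

If `i` is injective on objects and `p` is full, faithful and surjective on objects, a square
from `i` to `p` has a lift sending `i a` to `t a`, every other object to some preimage under
`p`, and morphisms to their unique preimages under `p`. Conversely, lifting against the functor
from the codiscrete category on the objects of the domain of `i` to the point (which is full,
faithful and surjective) recovers every object from its image under `i`.
-/

open CategoryTheory Limits

namespace Paper

/-- The class of maps with the right lifting property against all maps in `H`. -/
def Rlp {K : Type*} [Category K] (H : MorphismProperty K) : MorphismProperty K :=
  fun _ _ g => ∀ ⦃P Q : K⦄ (h : P ⟶ Q), H h → HasLiftingProperty h g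

/-- The class of maps with the left lifting property against all maps in `H`. -/
def Llp {K : Type*} [Category K] (H : MorphismProperty K) : MorphismProperty K :=
  fun _ _ f => ∀ ⦃P Q : K⦄ (h : P ⟶ Q), H h → HasLiftingProperty f h

/-- the unique functor `0 ⟶ 1` from the empty category to the terminal category -/
def mapEmpty : Cat.of (Discrete PEmpty) ⟶ Cat.of (Discrete PUnit) :=
  (Functor.empty _).toCatHom

/-- the inclusion `2 ↪ [1]` of the discrete category on two objects into the
linearly ordered set `{0 < 1}` -/
def inclFunctor : Discrete (Fin 2) ⥤ Fin 2 := Discrete.functor (fun i => (i : Fin 2))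

def mapIncl : Cat.of (Discrete (Fin 2)) ⟶ Cat.of (Fin 2) := inclFunctor.toCatHom

/-- the functor `p : P → [1]` from the parallel pair category which sends both
nontrivial arrows to the nontrivial arrow of `[1]` -/
def pFunctor : WalkingParallelPair ⥤ Fin 2 :=
  parallelPair (homOfLE (by decide : (0 : Fin 2) ≤ 1))
    (homOfLE (by decide : (0 : Fin 2) ≤ 1))

def mapP : Cat.of WalkingParallelPair ⟶ Cat.of (Fin 2) := pFunctor.toCatHom

/-- the set `I = {(0 → 1), (2 ↪ [1]), p : P → [1]}` of functors -/
def ICat : MorphismProperty Cat.{0, 0} := fun _ _ F =>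
  Arrow.mk F = Arrow.mk mapEmpty ∨ Arrow.mk F = Arrow.mk mapIncl ∨
    Arrow.mk F = Arrow.mk mapP

end Paper

namespace CategoryTheory

lemma Cat.hasLiftingProperty_iff {A B X Y : Cat} (i : A ⟶ B) (p : X ⟶ Y) :
    HasLiftingProperty i p ↔
      ∀ (t : A ⥤ X) (b : B ⥤ Y), t ⋙ p.toFunctor = i.toFunctor ⋙ b →
        ∃ l : B ⥤ X, i.toFunctor ⋙ l = t ∧ l ⋙ p.toFunctor = b := by
  constructor
  · intro _ t b w
    have sq : CommSq (Cat.Hom.ofFunctor t) i p (Cat.Hom.ofFunctor b) := ⟨Cat.Hom.ext w⟩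
    exact ⟨sq.lift.toFunctor, congrArg Cat.Hom.toFunctor sq.fac_left,
      congrArg Cat.Hom.toFunctor sq.fac_right⟩
  · refine fun h => ⟨fun {t b} sq => ?_⟩
    obtain ⟨l, hl, hr⟩ := h t.toFunctor b.toFunctor (congrArg Cat.Hom.toFunctor sq.w)
    exact ⟨⟨⟨Cat.Hom.ofFunctor l, Cat.Hom.ext hl, Cat.Hom.ext hr⟩⟩⟩

namespace Functor

variable {C D E E' : Type*} [Category C] [Category D] [Category E] [Category E']

lemma ext_of_comp_faithful {G H : C ⥤ E} (p : E ⥤ E') [p.Faithful]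
    (hobj : ∀ c, G.obj c = H.obj c) (h : G ⋙ p = H ⋙ p) : G = H :=
  Functor.ext hobj fun _ _ f => p.map_injective <| by
    simpa [eqToHom_map] using Functor.congr_hom h f

def FullyFaithful.liftOfObj {p : E ⥤ E'} (hp : p.FullyFaithful) (b : D ⥤ E')
    (o : D → E) (ho : ∀ d, p.obj (o d) = b.obj d) : D ⥤ E where
  obj := o
  map f := hp.preimage (eqToHom (ho _) ≫ b.map f ≫ eqToHom (ho _).symm)
  map_id _ := hp.map_injective (by simp)
  map_comp _ _ := hp.map_injective (by simp)

lemma FullyFaithful.liftOfObj_comp {p : E ⥤ E'} (hp : p.FullyFaithful) (b : D ⥤ E')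
    (o : D → E) (ho : ∀ d, p.obj (o d) = b.obj d) : hp.liftOfObj b o ho ⋙ p = b :=
  Functor.ext ho fun _ _ _ => by simp [liftOfObj]

theorem exists_lift_of_injective_obj (F : C ⥤ D) (hF : Function.Injective F.obj)
    (p : E ⥤ E') [p.Full] [p.Faithful] (hp : Function.Surjective p.obj)
    (t : C ⥤ E) (b : D ⥤ E') (w : t ⋙ p = F ⋙ b) :
    ∃ l : D ⥤ E, F ⋙ l = t ∧ l ⋙ p = b := by
  let o := Function.extend F.obj t.obj (Function.surjInv hp ∘ b.obj)
  have ho_comp (c : C) : o (F.obj c) = t.obj c := hF.extend_apply _ _ c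
  have ho (d : D) : p.obj (o d) = b.obj d := by
    by_cases hd : ∃ c, F.obj c = d
    · obtain ⟨c, rfl⟩ := hd
      rw [ho_comp]
      exact Functor.congr_obj w c
    · rw [show o d = _ from Function.extend_apply' _ _ _ hd]
      exact Function.surjInv_eq hp _
  have hff := Functor.FullyFaithful.ofFullyFaithful p
  refine ⟨hff.liftOfObj b o ho, ext_of_comp_faithful p ho_comp ?_,
    hff.liftOfObj_comp b o ho⟩
  rw [Functor.assoc, hff.liftOfObj_comp, w]

end Functor

lemma Limits.parallelPair_map_left_map_right {C : Type*} [Category C]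
    (F : WalkingParallelPair ⥤ C) : parallelPair (F.map .left) (F.map .right) = F :=
  Functor.ext (by rintro (_ | _) <;> rfl) (by rintro _ _ (_ | _ | _) <;> simp)

instance Codiscrete.full_star (α : Type*) : (Functor.star (Codiscrete α)).Full :=
  ⟨fun _ => ⟨⟨⟩, Subsingleton.elim _ _⟩⟩

instance Codiscrete.faithful_star (α : Type*) : (Functor.star (Codiscrete α)).Faithful :=
  ⟨fun _ => Subsingleton.elim _ _⟩

end CategoryTheory

namespace Paper

open Functor

section Generators

variable {X Y : Cat.{0, 0}} (p : X ⟶ Y)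

lemma hasLiftingProperty_mapEmpty_iff :
    HasLiftingProperty mapEmpty p ↔ Function.Surjective p.toFunctor.obj := by
  rw [Cat.hasLiftingProperty_iff]
  constructor
  · intro h y
    obtain ⟨l, -, hl⟩ := h (Functor.empty X) (fromPUnit y) (Functor.empty_ext' _ _)
    exact ⟨l.obj ⟨⟨⟩⟩, Functor.congr_obj hl ⟨⟨⟩⟩⟩
  · intro hp t b _
    obtain ⟨x, hx⟩ := hp (b.obj ⟨⟨⟩⟩)
    exact ⟨fromPUnit x, Functor.empty_ext' _ _, Discrete.functor_ext fun _ => hx⟩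

lemma hasLiftingProperty_mapIncl_iff :
    HasLiftingProperty mapIncl p ↔ p.toFunctor.Full := by
  rw [Cat.hasLiftingProperty_iff]
  constructor
  · refine fun h => ⟨fun {x₀ x₁} g => ?_⟩
    obtain ⟨l, hl, hr⟩ := h (Discrete.functor ![x₀, x₁]) (ComposableArrows.mk₁ g)
      (Discrete.functor_ext fun i => by fin_cases i <;> rfl)
    obtain ⟨z₀, z₁, f, rfl⟩ := ComposableArrows.mk₁_surjective l
    obtain rfl : z₀ = x₀ := Functor.congr_obj hl ⟨0⟩
    obtain rfl : z₁ = x₁ := Functor.congr_obj hl ⟨1⟩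
    have hf : p.toFunctor.map f = eqToHom rfl ≫ g ≫ eqToHom rfl :=
      Functor.congr_hom hr (homOfLE (by decide) : (0 : Fin 2) ⟶ 1)
    exact ⟨f, by simpa using hf⟩
  · intro _ t b w
    have h₀ := Functor.congr_obj w ⟨0⟩
    have h₁ := Functor.congr_obj w ⟨1⟩
    refine ⟨ComposableArrows.mk₁
      (p.toFunctor.preimage
        (eqToHom h₀ ≫ b.map (homOfLE (by decide) : (0 : Fin 2) ⟶ 1) ≫ eqToHom h₁.symm)),
      Discrete.functor_ext fun i => by fin_cases i <;> rfl, ?_⟩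
    exact ComposableArrows.ext₁ h₀ h₁ (p.toFunctor.map_preimage _)

lemma hasLiftingProperty_mapP_iff :
    HasLiftingProperty mapP p ↔ p.toFunctor.Faithful := by
  rw [Cat.hasLiftingProperty_iff]
  constructor
  · refine fun h => ⟨fun {x₀ x₁} f g hfg => ?_⟩
    have w : parallelPair f g ⋙ p.toFunctor =
        pFunctor ⋙ ComposableArrows.mk₁ (p.toFunctor.map f) :=
      calc parallelPair f g ⋙ p.toFunctor
          = parallelPair (p.toFunctor.map f) (p.toFunctor.map g) :=
            (parallelPair_map_left_map_right _).symm
        _ = parallelPair (p.toFunctor.map f) (p.toFunctor.map f) := by rw [hfg]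
        _ = _ := parallelPair_map_left_map_right (pFunctor ⋙ ComposableArrows.mk₁ _)
    obtain ⟨l, hl, -⟩ := h _ _ w
    have hlr : (mapP.toFunctor ⋙ l).map .left = (mapP.toFunctor ⋙ l).map .right := rfl
    rw [hl] at hlr
    simpa using hlr
  · intro _ t b w
    change WalkingParallelPair ⥤ X at t
    have hlr : t.map .left = t.map .right := p.toFunctor.map_injective
      ((Functor.congr_hom w .left).trans (Functor.congr_hom w .right).symm)
    refine ⟨ComposableArrows.mk₁ (t.map .left), ?_,
      ComposableArrows.ext₁ (Functor.congr_obj w .zero) (Functor.congr_obj w .one)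
        (Functor.congr_hom w .left)⟩
    calc pFunctor ⋙ ComposableArrows.mk₁ (t.map .left)
        = parallelPair (t.map .left) (t.map .left) :=
          (parallelPair_map_left_map_right (pFunctor ⋙ ComposableArrows.mk₁ _)).symm
      _ = parallelPair (t.map .left) (t.map .right) := by rw [hlr]
      _ = t := parallelPair_map_left_map_right t

end Generators

lemma rlp_ICat_iff {X Y : Cat.{0, 0}} (p : X ⟶ Y) : Rlp ICat p ↔
    p.toFunctor.Full ∧ p.toFunctor.Faithful ∧ Function.Surjective p.toFunctor.obj := by
  constructor
  · intro h
    exact ⟨(hasLiftingProperty_mapIncl_iff p).1 (h _ (Or.inr (Or.inl rfl))),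
      (hasLiftingProperty_mapP_iff p).1 (h _ (Or.inr (Or.inr rfl))),
      (hasLiftingProperty_mapEmpty_iff p).1 (h _ (Or.inl rfl))⟩
  · rintro ⟨hfull, hfaith, hsurj⟩ _ _ i (e | e | e)
    · exact (HasLiftingProperty.iff_of_arrow_iso_left (eqToIso e) p).2
        ((hasLiftingProperty_mapEmpty_iff p).2 hsurj)
    · exact (HasLiftingProperty.iff_of_arrow_iso_left (eqToIso e) p).2
        ((hasLiftingProperty_mapIncl_iff p).2 hfull)
    · exact (HasLiftingProperty.iff_of_arrow_iso_left (eqToIso e) p).2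
        ((hasLiftingProperty_mapP_iff p).2 hfaith)

lemma llp_rlp_ICat_iff {A B : Cat.{0, 0}} (i : A ⟶ B) :
    Llp (Rlp ICat) i ↔ Function.Injective i.toFunctor.obj := by
  constructor
  · intro h a₁ a₂ ha
    have hstar : Rlp ICat (Functor.star (Codiscrete A)).toCatHom :=
      (rlp_ICat_iff _).2
        ⟨Codiscrete.full_star A, Codiscrete.faithful_star A, fun _ => ⟨⟨a₁⟩, rfl⟩⟩
    obtain ⟨l, hl, -⟩ := (Cat.hasLiftingProperty_iff _ _).1 (h _ hstar)
      (Codiscrete.functor id) (Functor.star B) (Functor.punit_ext' _ _)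
    have hla (a : A) : l.obj (i.toFunctor.obj a) = ⟨a⟩ := Functor.congr_obj hl a
    simpa [hla] using congrArg l.obj ha
  · intro hi _ _ p hp
    obtain ⟨_, _, hsurj⟩ := (rlp_ICat_iff p).1 hp
    exact (Cat.hasLiftingProperty_iff i p).2 fun t b w =>
      Functor.exists_lift_of_injective_obj _ hi _ hsurj t b w

/-- in `Cat`, with `I` as above: (1) `I^□` consists exactly of the
functors which are full, faithful and surjective on objects; (2) `□(I^□)` consists
exactly of the functors which are injective on objects. -/
theorem statement7 :
    (Rlp ICat = fun _ _ F => F.toFunctor.Full ∧ F.toFunctor.Faithful ∧ Function.Surjective F.toFunctor.obj) ∧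
    (Llp (Rlp ICat) = fun _ _ F => Function.Injective F.toFunctor.obj) :=
  ⟨MorphismProperty.ext _ _ fun _ _ => rlp_ICat_iff,
    MorphismProperty.ext _ _ fun _ _ => llp_rlp_ICat_iff⟩

end Paper
end

section
/- Let F ⊣ G and F' ⊣ G' be adjunctions between categories X and A (F, F': X → A left adjoints, G, G': A → X right adjoints), and let α: F ⟹ F' and β: G' ⟹ G be conjugate natural transformations. Assume A has pushouts and X has pullbacks. Then for every map f: X → Y in X and every map g: A → B in A, the lifting relation (f ⋆ α) ⧄ g holds if and only if f ⧄ (β ⋆ g) holds. -/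
universe v u₁ u₂

open CategoryTheory Limits

namespace Paper

section Star

variable {X : Type u₁} [Category.{v} X] {A : Type u₂} [Category.{v} A]

/-- `f ⋆ α`: the induced map from the pushout of `F f` along `α_X` to `F' Y`. -/
noncomputable def starMap [HasPushouts A] {F F' : X ⥤ A} (α : F ⟶ F')
    {x y : X} (f : x ⟶ y) : pushout (F.map f) (α.app x) ⟶ F'.obj y :=
  pushout.desc (α.app y) (F'.map f) (α.naturality f)

/-- `β ⋆ g`: the induced map from `G' A` to the pullback of `β_B` along `G g`. -/
noncomputable def costarMap [HasPullbacks X] {G G' : A ⥤ X} (β : G' ⟶ G)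
    {a b : A} (g : a ⟶ b) : G'.obj a ⟶ pullback (β.app b) (G.map g) :=
  pullback.lift (G'.map g) (β.app a) (β.naturality g)

/-- `α : F ⟶ F'` and `β : G' ⟶ G` are conjugate with respect to the adjunctions
`F ⊣ G` and `F' ⊣ G'`: the square of adjunction bijections together with
precomposition by `α_X` and postcomposition by `β_A` commutes. -/
def Conjugate {F F' : X ⥤ A} {G G' : A ⥤ X} (adj : F ⊣ G) (adj' : F' ⊣ G')
    (α : F ⟶ F') (β : G' ⟶ G) : Prop :=
  ∀ (x : X) (a : A) (u : F'.obj x ⟶ a),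
    (adj.homEquiv x a) (α.app x ≫ u) = (adj'.homEquiv x a) u ≫ β.app a

end Star

/-!
Conjugacy of `α` and `β` is precisely naturality of the adjunction bijections in a parameter
running over the walking arrow `0 ⟶ 1`: the bifunctors `0 ↦ F, 1 ↦ F'` and `0 ↦ G, 1 ↦ G'`
form an adjunction with a parameter. For it, `f ⋆ α` and `β ⋆ g` are the Leibniz pushout
and pullback, which are exchanged by the adjunction on lifting problems and their solutions
(`ParametrizedAdjunction.hasLiftingProperty_iff`).
-/

section Conjugate

variable {X : Type u₁} [Category.{v} X] {A : Type u₂} [Category.{v} A]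
  {F F' : X ⥤ A} {G G' : A ⥤ X}

noncomputable def Conjugate.parametrizedAdjunction {adj : F ⊣ G} {adj' : F' ⊣ G'}
    {α : F ⟶ F'} {β : G' ⟶ G} (hconj : Conjugate adj adj' α β) :
    ComposableArrows.mk₁ α ⊣₂ (ComposableArrows.mk₁ β.op).leftOp :=
  .mk' (fun | ⟨0, _⟩ => adj | ⟨1, _⟩ => adj') fun {i j} h x a u => by
    rcases (leOfHom h).eq_or_lt with rfl | hlt
    · obtain rfl : h = 𝟙 i := Subsingleton.elim _ _
      simp only [CategoryTheory.Functor.map_id, op_id, NatTrans.id_app, Category.id_comp,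
        Category.comp_id]
    · obtain ⟨rfl, rfl⟩ : i = 0 ∧ j = 1 := by constructor <;> ext <;> simp <;> omega
      exact hconj x a u

noncomputable def starPushoutObjObj [HasPushouts A] (α : F ⟶ F') {x y : X} (f : x ⟶ y) :
    (ComposableArrows.mk₁ α).PushoutObjObj (homOfLE (Fin.zero_le 1)) f where
  pt := pushout (F.map f) (α.app x)
  inl := pushout.inr _ _
  inr := pushout.inl _ _
  isPushout := (IsPushout.of_hasPushout _ _).flip
  ι := starMap α f
  inl_ι := pushout.inr_desc _ _ _
  inr_ι := pushout.inl_desc _ _ _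

noncomputable def costarPullbackObjObj [HasPullbacks X] (β : G' ⟶ G) {a b : A} (g : a ⟶ b) :
    (ComposableArrows.mk₁ β.op).leftOp.PullbackObjObj (homOfLE (Fin.zero_le 1)) g where
  pt := pullback (β.app b) (G.map g)
  fst := pullback.snd _ _
  snd := pullback.fst _ _
  isPullback := (IsPullback.of_hasPullback _ _).flip
  π := costarMap β g
  π_fst := pullback.lift_snd _ _ _
  π_snd := pullback.lift_fst _ _ _

end Conjugate

/-- for conjugate natural transformations `α : F ⟶ F'` and `β : G' ⟶ G`
between adjunctions `F ⊣ G`, `F' ⊣ G'`, the lifting relation `(f ⋆ α) ⧄ g` holds iff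
`f ⧄ (β ⋆ g)` holds. -/
theorem statement9 {X : Type u₁} [Category.{v} X] {A : Type u₂} [Category.{v} A]
    [HasPushouts A] [HasPullbacks X]
    {F F' : X ⥤ A} {G G' : A ⥤ X} (adj : F ⊣ G) (adj' : F' ⊣ G')
    (α : F ⟶ F') (β : G' ⟶ G) (hconj : Conjugate adj adj' α β)
    {x y : X} (f : x ⟶ y) {a b : A} (g : a ⟶ b) :
    HasLiftingProperty (starMap α f) g ↔ HasLiftingProperty f (costarMap β g) :=
  hconj.parametrizedAdjunction.hasLiftingProperty_iff (starPushoutObjObj α f)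
    (costarPullbackObjObj β g)

end Paper
end
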